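/- There are no α_L, α_F ∈ [0,1] such that ⌊11L⌋_{α_L} = ⌊11F⌋_{α_F} and this common set is a numerical semigroup; i.e., no numerical semigroup of multiplicity 11 is simultaneously a discretization of L and of F. -/

import Mathlib

/-- The sequence `λ_i = log₂ (i + 1)`. -/
noncomputable def Lseq : ℕ → ℝ := fun i => Real.logb 2 (i + 1)

/-- The golden ratio `φ = (1 + √5) / 2`. -/
noncomputable def phi : ℝ := (1 + Real.sqrt 5) / 2

/-- Given `p ∈ (0,1)` (with `q = 1 - p`), the recursively defined division functions
`f_ℓ : {0, …, 2^ℓ - 1} → [0, 1)`: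
`f₀ 0 = 0`, `f_{ℓ+1} n = p * f_ℓ n` if `n < 2^ℓ`, and `f_{ℓ+1} n = p + q * f_ℓ (n - 2^ℓ)`
otherwise. -/
noncomputable def fcut (p : ℝ) : ℕ → ℕ → ℝ
  | 0, _ => 0
  | ℓ + 1, n => if n < 2 ^ ℓ then p * fcut p ℓ n else p + (1 - p) * fcut p ℓ (n - 2 ^ ℓ)

/-- The golden fractal mold `F`:
`φ_i = ⌊log₂ (i+1)⌋ + f_{⌊log₂ (i+1)⌋} (i + 1 - 2 ^ ⌊log₂ (i+1)⌋)` with `p = φ - 1`.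
(Here `⌊log₂ (i+1)⌋ = Nat.log 2 (i+1)`.) -/
noncomputable def Fgold : ℕ → ℝ := fun i =>
  (Nat.log 2 (i + 1) : ℝ) +
    fcut (phi - 1) (Nat.log 2 (i + 1)) (i + 1 - 2 ^ Nat.log 2 (i + 1))

/-- Rounding by `α`: `⌊r⌋_α = ⌊r⌋` if `r - ⌊r⌋ < α`, and `⌈r⌉` otherwise. -/
noncomputable def floorAlpha (r α : ℝ) : ℤ := if r - ⌊r⌋ < α then ⌊r⌋ else ⌈r⌉

/-- The discretization `⌊mM⌋_α = {⌊m μ_i⌋_α : i ∈ ℕ}` of a mold `μ`, as a set of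
natural numbers. -/
noncomputable def discr (μ : ℕ → ℝ) (m : ℕ) (α : ℝ) : Set ℕ :=
  {n : ℕ | ∃ i : ℕ, (n : ℤ) = floorAlpha ((m : ℝ) * μ i) α}

/-- A numerical semigroup: a subset of `ℕ` containing `0`, with finite complement,
closed under addition. -/
def IsNumSgp (S : Set ℕ) : Prop :=
  0 ∈ S ∧ Sᶜ.Finite ∧ ∀ a ∈ S, ∀ b ∈ S, a + b ∈ S

/-! Since `2 ^ 17 < 3 ^ 11 < 2 ^ 18`, the point `11 λ₂ = 11 log₂ 3` rounds to `17` or `18`.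

If it rounds to `17`, then `34` lies in the semigroup, hence in `⌊11F⌋_{α_F}`; but
`11 φᵢ ≤ 33` for `i + 1 ≤ 2 ^ 3`, while for larger `i` already
`11 φᵢ ≥ 11 (3 + (φ - 1) ^ 3) = 11 (1 + √5) > 35`.

If it rounds to `18`, then `α_L ≤ frac (11 log₂ 3)` and `36` lies in `⌊11L⌋_{α_L}`. Only
`i = 9` can produce it, but `3 ^ 11 * 2 ^ 19 < 10 ^ 11` gives
`frac (11 log₂ 10) > frac (11 log₂ 3) ≥ α_L`, so `11 log₂ 10 ∈ (36, 37)` rounds up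
to `37`. -/

lemma floor_le_floorAlpha (r α : ℝ) : ⌊r⌋ ≤ floorAlpha r α := by
  unfold floorAlpha
  split
  exacts [le_rfl, Int.floor_le_ceil r]

lemma floorAlpha_le_ceil (r α : ℝ) : floorAlpha r α ≤ ⌈r⌉ := by
  unfold floorAlpha
  split
  exacts [Int.floor_le_ceil r, le_rfl]

lemma floorAlpha_of_fract_lt {r α : ℝ} (h : Int.fract r < α) : floorAlpha r α = ⌊r⌋ :=
  if_pos h

lemma floorAlpha_of_le_fract {r α : ℝ} (h : α ≤ Int.fract r) : floorAlpha r α = ⌈r⌉ :=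
  if_neg h.not_gt

lemma floorAlpha_lt_of_add_one_le {r α : ℝ} {n : ℤ} (h : r + 1 ≤ n) : floorAlpha r α < n :=
  (floorAlpha_le_ceil r α).trans_lt (Int.ceil_lt_iff.2 (by linarith))

lemma lt_floorAlpha_of_add_one_le {r α : ℝ} {n : ℤ} (h : n + 1 ≤ r) : n < floorAlpha r α :=
  (Int.lt_floor_iff.2 (by linarith)).trans_le (floor_le_floorAlpha r α)

lemma fcut_zero_right (p : ℝ) (ℓ : ℕ) : fcut p ℓ 0 = 0 := by
  induction ℓ with
  | zero => rfl
  | succ ℓ ih => rw [fcut, if_pos (Nat.two_pow_pos ℓ), ih, mul_zero]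

lemma fcut_mem_Icc {p : ℝ} (hp₀ : 0 ≤ p) (hp₁ : p ≤ 1) (ℓ n : ℕ) :
    fcut p ℓ n ∈ Set.Icc 0 1 := by
  induction ℓ generalizing n with
  | zero => simp [fcut]
  | succ ℓ ih =>
    rw [fcut]
    split
    · obtain ⟨h₀, h₁⟩ := ih n
      exact ⟨mul_nonneg hp₀ h₀, mul_le_one₀ hp₁ h₀ h₁⟩
    · obtain ⟨h₀, h₁⟩ := ih (n - 2 ^ ℓ)
      constructor <;> nlinarith

lemma pow_le_fcut {p : ℝ} (hp₀ : 0 ≤ p) (hp₁ : p ≤ 1) {ℓ n : ℕ} (hn₀ : 1 ≤ n)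
    (hn : n < 2 ^ ℓ) : p ^ ℓ ≤ fcut p ℓ n := by
  induction ℓ generalizing n with
  | zero => omega
  | succ ℓ ih =>
    rw [fcut, pow_succ']
    split
    · next h => exact mul_le_mul_of_nonneg_left (ih hn₀ h) hp₀
    · have := (fcut_mem_Icc hp₀ hp₁ ℓ (n - 2 ^ ℓ)).1
      have := pow_le_one₀ hp₀ hp₁ (n := ℓ)
      nlinarith

lemma phi_sub_one_mem_Icc : phi - 1 ∈ Set.Icc (0 : ℝ) 1 := by
  have h₁ : 1 < phi := Real.one_lt_goldenRatio
  have h₂ : phi < 2 := Real.goldenRatio_lt_two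
  constructor <;> linarith

lemma phi_sub_one_pow_three : (phi - 1) ^ 3 = √5 - 2 := by
  unfold phi
  linear_combination (√5 - 3) / 8 * Real.sq_sqrt (show (0 : ℝ) ≤ 5 by norm_num)

lemma Fgold_le_of_succ_le_two_pow {i k : ℕ} (h : i + 1 ≤ 2 ^ k) : Fgold i ≤ k := by
  rcases h.eq_or_lt with h | h
  · rw [Fgold, h, Nat.log_pow one_lt_two, Nat.sub_self, fcut_zero_right, add_zero]
  · have hlog : Nat.log 2 (i + 1) < k := Nat.log_lt_of_lt_pow (by omega) h
    have hcut := (fcut_mem_Icc phi_sub_one_mem_Icc.1 phi_sub_one_mem_Icc.2 (Nat.log 2 (i + 1))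
      (i + 1 - 2 ^ Nat.log 2 (i + 1))).2
    have : (Nat.log 2 (i + 1) : ℝ) + 1 ≤ k := by exact_mod_cast hlog
    rw [Fgold]
    linarith

lemma add_pow_le_Fgold {i k : ℕ} (h : 2 ^ k < i + 1) : k + (phi - 1) ^ k ≤ Fgold i := by
  obtain ⟨hp₀, hp₁⟩ := phi_sub_one_mem_Icc
  have hk : k ≤ Nat.log 2 (i + 1) := Nat.le_log_of_pow_le one_lt_two h.le
  rw [Fgold]
  rcases hk.eq_or_lt with hk | hk
  · have hlt : i + 1 < 2 ^ k * 2 := hk ▸ Nat.lt_pow_succ_log_self one_lt_two (i + 1)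
    rw [← hk]
    gcongr
    exact pow_le_fcut hp₀ hp₁ (by omega) (by omega)
  · have : (k : ℝ) + 1 ≤ Nat.log 2 (i + 1) := by exact_mod_cast hk
    have := pow_le_one₀ hp₀ hp₁ (n := k)
    have := (fcut_mem_Icc hp₀ hp₁ (Nat.log 2 (i + 1)) (i + 1 - 2 ^ Nat.log 2 (i + 1))).1
    linarith

lemma natCast_mul_Lseq (m i : ℕ) :
    (m : ℝ) * Lseq i = Real.logb 2 (((i + 1) ^ m : ℕ) : ℝ) := by
  rw [Lseq, Nat.cast_pow, Real.logb_pow]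
  push_cast
  ring

lemma lt_natCast_mul_Lseq_iff {k m i : ℕ} : (k : ℝ) < m * Lseq i ↔ 2 ^ k < (i + 1) ^ m := by
  rw [natCast_mul_Lseq, Real.lt_logb_iff_rpow_lt one_lt_two (by positivity), Real.rpow_natCast]
  exact_mod_cast Iff.rfl

lemma natCast_mul_Lseq_lt_iff {k m i : ℕ} : (m : ℝ) * Lseq i < k ↔ (i + 1) ^ m < 2 ^ k := by
  rw [natCast_mul_Lseq, Real.logb_lt_iff_lt_rpow one_lt_two (by positivity), Real.rpow_natCast]
  exact_mod_cast Iff.rfl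

lemma natCast_add_mul_Lseq_lt_iff {k m i j : ℕ} :
    (k : ℝ) + m * Lseq i < m * Lseq j ↔ 2 ^ k * (i + 1) ^ m < (j + 1) ^ m := by
  have hk : (k : ℝ) = Real.logb 2 ((2 ^ k : ℕ) : ℝ) := by
    rw [Nat.cast_pow, Nat.cast_ofNat, Real.logb_pow, Real.logb_self_eq_one one_lt_two, mul_one]
  rw [natCast_mul_Lseq, natCast_mul_Lseq, hk, ← Real.logb_mul (by positivity) (by positivity),
    ← Nat.cast_mul, Real.logb_lt_logb_iff one_lt_two (by positivity) (by positivity)]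
  exact_mod_cast Iff.rfl

lemma floor_natCast_mul_Lseq {k m i : ℕ} (h₁ : 2 ^ k < (i + 1) ^ m)
    (h₂ : (i + 1) ^ m < 2 ^ (k + 1)) : ⌊(m : ℝ) * Lseq i⌋ = k := by
  have := lt_natCast_mul_Lseq_iff.2 h₁
  have := natCast_mul_Lseq_lt_iff.2 h₂
  rw [Int.floor_eq_iff]
  push_cast at *
  constructor <;> linarith

lemma ceil_natCast_mul_Lseq {k m i : ℕ} (h₁ : 2 ^ k < (i + 1) ^ m)
    (h₂ : (i + 1) ^ m < 2 ^ (k + 1)) : ⌈(m : ℝ) * Lseq i⌉ = k + 1 := by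
  have := lt_natCast_mul_Lseq_iff.2 h₁
  have := natCast_mul_Lseq_lt_iff.2 h₂
  rw [Int.ceil_eq_iff]
  push_cast at *
  constructor <;> linarith

lemma thirtyFour_notMem_discr_Fgold (α : ℝ) : 34 ∉ discr Fgold 11 α := by
  rintro ⟨i, hi⟩
  refine (?_ : floorAlpha ((11 : ℕ) * Fgold i) α ≠ 34) hi.symm
  rcases le_or_gt (i + 1) (2 ^ 3) with hsmall | hlarge
  · have := Fgold_le_of_succ_le_two_pow hsmall
    refine (floorAlpha_lt_of_add_one_le ?_).ne
    push_cast at *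
    linarith
  · have := add_pow_le_Fgold hlarge
    have : (24 / 11 : ℝ) < √5 := by
      rw [Real.lt_sqrt (by norm_num)]
      norm_num
    refine (lt_floorAlpha_of_add_one_le ?_).ne'
    rw [phi_sub_one_pow_three] at *
    push_cast at *
    linarith

lemma thirtySix_notMem_discr_Lseq {α : ℝ} (hα : α ≤ Int.fract ((11 : ℕ) * Lseq 2)) :
    36 ∉ discr Lseq 11 α := by
  rintro ⟨i, hi⟩
  refine (?_ : floorAlpha ((11 : ℕ) * Lseq i) α ≠ 36) hi.symm
  rcases lt_trichotomy i 9 with hsmall | rfl | hlarge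
  · have : (i + 1) ^ 11 < 2 ^ 35 :=
      (Nat.pow_le_pow_left (by omega : i + 1 ≤ 9) 11).trans_lt (by norm_num)
    have := natCast_mul_Lseq_lt_iff.2 this
    refine (floorAlpha_lt_of_add_one_le ?_).ne
    push_cast at *
    linarith
  · have hfract : Int.fract ((11 : ℕ) * Lseq 2) < Int.fract ((11 : ℕ) * Lseq 9) := by
      have := natCast_add_mul_Lseq_lt_iff.2 (by norm_num : 2 ^ 19 * (2 + 1) ^ 11 < (9 + 1) ^ 11)
      rw [← Int.self_sub_floor, ← Int.self_sub_floor,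
        floor_natCast_mul_Lseq (k := 17) (by norm_num) (by norm_num),
        floor_natCast_mul_Lseq (k := 36) (by norm_num) (by norm_num)]
      push_cast at *
      linarith
    rw [floorAlpha_of_le_fract (hα.trans hfract.le),
      ceil_natCast_mul_Lseq (k := 36) (by norm_num) (by norm_num)]
    norm_num
  · have : 2 ^ 37 < (i + 1) ^ 11 :=
      (by norm_num : 2 ^ 37 < 11 ^ 11).trans_le (Nat.pow_le_pow_left (by omega) 11)
    have := lt_natCast_mul_Lseq_iff.2 this
    refine (lt_floorAlpha_of_add_one_le ?_).ne'
    push_cast at *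
    linarith

/-- there are no `α_L, α_F ∈ [0,1]` such that `⌊11L⌋_{α_L} = ⌊11F⌋_{α_F}`
is a numerical semigroup: no numerical semigroup of multiplicity `11` is simultaneously a
discretization of `L` and of `F`. -/
theorem no_simultaneous_discretization_eleven :
    ¬ ∃ αL αF : ℝ, αL ∈ Set.Icc (0 : ℝ) 1 ∧ αF ∈ Set.Icc (0 : ℝ) 1 ∧
      discr Lseq 11 αL = discr Fgold 11 αF ∧ IsNumSgp (discr Lseq 11 αL) := by
  rintro ⟨αL, αF, -, -, hEq, -, -, hadd⟩
  have h₁ : (2 : ℕ) ^ 17 < (2 + 1) ^ 11 := by norm_num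
  have h₂ : (2 + 1) ^ 11 < (2 : ℕ) ^ (17 + 1) := by norm_num
  by_cases hα : αL ≤ Int.fract ((11 : ℕ) * Lseq 2)
  · have h18 : 18 ∈ discr Lseq 11 αL :=
      ⟨2, by rw [floorAlpha_of_le_fract hα, ceil_natCast_mul_Lseq h₁ h₂]; rfl⟩
    exact thirtySix_notMem_discr_Lseq hα (hadd _ h18 _ h18)
  · have h17 : 17 ∈ discr Lseq 11 αL :=
      ⟨2, by rw [floorAlpha_of_fract_lt (not_le.1 hα), floor_natCast_mul_Lseq h₁ h₂]⟩
    exact thirtyFour_notMem_discr_Fgold αF (hEq ▸ hadd _ h17 _ h17)
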